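/- Let D = ℤ × ℤ be the left brace with operations (k₁, k₂) + (t₁, t₂) = (k₁ + t₁, k₂ + t₂) and (k₁, k₂)·(t₁, t₂) = (k₁ + t₁, k₁t₁ + k₂ + t₂). If A is any left brace generated by one element with A³ = ⟨0⟩ = A^{(3)} (where 3 and 3 are the least such integers, i.e. A ∈ 𝒩_S(3,3)), then there exists a surjective brace homomorphism f : D → A (a map that is simultaneously a homomorphism of the additive groups and of the multiplicative groups). -/

import Mathlib

/-- A left brace: `(A, +)` is an abelian group, `(A, *)` is a group, and
`a * (b + c) = a * b + a * c - a` for all `a b c`. -/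
class LeftBrace (A : Type*) extends AddCommGroup A, Group A where
  mul_add_eq : ∀ a b c : A, a * (b + c) = a * b + a * c - a

namespace LeftBrace

variable {A : Type*} [LeftBrace A]

/-- The star operation of a left brace: `a ⋆ b = a * b - a - b`. -/
def star (a b : A) : A := a * b - a - b

/-- `K ⋆ L`: the subgroup of the additive group of `A` generated by all
`x ⋆ y` with `x ∈ K`, `y ∈ L`. -/
def setStar (K L : Set A) : AddSubgroup A :=
  AddSubgroup.closure (Set.image2 star K L)

/-- A subbrace of `A`: a subset that is simultaneously a subgroup of the
additive group of `A` and a subgroup of the multiplicative group of `A`. -/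
def IsSubbrace (S : Set A) : Prop :=
  (0 : A) ∈ S ∧ (∀ x ∈ S, ∀ y ∈ S, x + y ∈ S) ∧ (∀ x ∈ S, -x ∈ S) ∧
    (1 : A) ∈ S ∧ (∀ x ∈ S, ∀ y ∈ S, x * y ∈ S) ∧ (∀ x ∈ S, x⁻¹ ∈ S)

/-- A left ideal of `A`: a subbrace `S` with `a ⋆ b ∈ S` for all `a ∈ A`, `b ∈ S`. -/
def IsLeftIdeal (S : Set A) : Prop :=
  IsSubbrace S ∧ ∀ a : A, ∀ b ∈ S, star a b ∈ S

/-- An ideal of `A`: a subbrace `S` with `a ⋆ z ∈ S` and `z ⋆ a ∈ S`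
for all `a ∈ A`, `z ∈ S`. -/
def IsIdeal (S : Set A) : Prop :=
  IsSubbrace S ∧ ∀ a : A, ∀ z ∈ S, star a z ∈ S ∧ star z a ∈ S

/-- The left series of the brace `A`, with the indexing shifted by one:
`leftSeriesN A 0 = A¹ = A` and `leftSeriesN A n = Aⁿ⁺¹ = A ⋆ Aⁿ`.
In particular `leftSeriesN A 1 = A²` and `leftSeriesN A 2 = A³`. -/
def leftSeriesN (A : Type*) [LeftBrace A] : ℕ → AddSubgroup A
  | 0 => ⊤
  | n + 1 => setStar Set.univ ((leftSeriesN A n : AddSubgroup A) : Set A)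

/-- The right series of the brace `A`, with the indexing shifted by one:
`rightSeriesN A 0 = A⁽¹⁾ = A` and `rightSeriesN A n = A⁽ⁿ⁺¹⁾ = A⁽ⁿ⁾ ⋆ A`.
In particular `rightSeriesN A 2 = A⁽³⁾` and `rightSeriesN A 3 = A⁽⁴⁾`. -/
def rightSeriesN (A : Type*) [LeftBrace A] : ℕ → AddSubgroup A
  | 0 => ⊤
  | n + 1 => setStar ((rightSeriesN A n : AddSubgroup A) : Set A) Set.univ

end LeftBrace

open LeftBrace

/-- The underlying set `D = ℤ × ℤ` (as a type synonym, so that the brace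
multiplication below does not clash with the componentwise product). -/
def TwoBrace : Type := ℤ × ℤ

namespace TwoBrace

/-- The addition of `D` is componentwise: `(k₁,k₂)+(t₁,t₂) = (k₁+t₁, k₂+t₂)`. -/
instance : AddCommGroup TwoBrace := inferInstanceAs (AddCommGroup (ℤ × ℤ))

/-- The multiplication of `D`: `(k₁,k₂)·(t₁,t₂) = (k₁+t₁, k₁t₁+k₂+t₂)`. -/
instance instGroup : Group TwoBrace where
  mul x y := ((x.1 + y.1, x.1 * y.1 + x.2 + y.2) : ℤ × ℤ)
  one := ((0, 0) : ℤ × ℤ)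
  inv x := ((-x.1, x.1 ^ 2 - x.2) : ℤ × ℤ)
  mul_assoc a b c := show
      ((a.1 + b.1 + c.1, (a.1 + b.1) * c.1 + (a.1 * b.1 + a.2 + b.2) + c.2) : ℤ × ℤ)
      = (a.1 + (b.1 + c.1), a.1 * (b.1 + c.1) + a.2 + (b.1 * c.1 + b.2 + c.2)) by
    refine Prod.ext ?_ ?_ <;> dsimp <;> ring
  one_mul a := show ((0 + a.1, 0 * a.1 + 0 + a.2) : ℤ × ℤ) = (a.1, a.2) by
    refine Prod.ext ?_ ?_ <;> dsimp <;> ring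
  mul_one a := show ((a.1 + 0, a.1 * 0 + a.2 + 0) : ℤ × ℤ) = (a.1, a.2) by
    refine Prod.ext ?_ ?_ <;> dsimp <;> ring
  inv_mul_cancel a := show
      ((-a.1 + a.1, -a.1 * a.1 + (a.1 ^ 2 - a.2) + a.2) : ℤ × ℤ) = ((0, 0) : ℤ × ℤ) by
    refine Prod.ext ?_ ?_ <;> dsimp <;> ring

/-- `D` with these two operations is a left brace. -/
instance instLeftBrace : LeftBrace TwoBrace :=
  { (inferInstance : AddCommGroup TwoBrace), (inferInstance : Group TwoBrace) with
    mul_add_eq := fun a b c => show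
        ((a.1 + (b.1 + c.1), a.1 * (b.1 + c.1) + a.2 + (b.2 + c.2)) : ℤ × ℤ)
        = ((a.1 + b.1) + (a.1 + c.1) - a.1,
            (a.1 * b.1 + a.2 + b.2) + (a.1 * c.1 + a.2 + c.2) - a.2) by
      refine Prod.ext ?_ ?_ <;> dsimp <;> ring }

end TwoBrace

/-!
Since `A³ = 0 = A⁽³⁾`, the star operation of `A` is biadditive and vanishes as soon as one
argument lies in `A²`. For a generator `a` and `s = a ⋆ a` this makes
`(m, n) ↦ m • a + n • s` a brace homomorphism `D → A`: both the multiplication of `D` and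
`x * y = x + y + x ⋆ y` produce the cross term `m m' • s`. Its image is a subbrace containing
`a`, hence all of `A`.
-/

namespace LeftBrace

variable {A : Type*} [LeftBrace A]

theorem mul_eq_add_add_star (a b : A) : a * b = a + b + star a b := by
  unfold star; abel

theorem mul_zero_eq_self (a : A) : a * 0 = a := by
  have h := mul_add_eq a 0 0
  rw [add_zero] at h
  have h' : a * 0 + a = a * 0 + a * 0 := by nth_rewrite 1 [h]; abel
  exact (add_left_cancel h').symm

theorem mul_neg_eq (a b : A) : a * -b = a + a - a * b := by
  have h := mul_add_eq a b (-b)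
  rw [add_neg_cancel, mul_zero_eq_self] at h
  rw [eq_sub_iff_add_eq.mp h]
  abel

theorem star_add_right (a b c : A) : star a (b + c) = star a b + star a c := by
  unfold star; rw [mul_add_eq]; abel

def starRight (a : A) : A →+ A := AddMonoidHom.mk' (star a) (star_add_right a)

theorem star_neg_right (a b : A) : star a (-b) = -star a b := map_neg (starRight a) b

theorem star_zsmul_right (a : A) (n : ℤ) (b : A) : star a (n • b) = n • star a b :=
  map_zsmul (starRight a) n b

theorem star_mul_left (a b c : A) :
    star (a * b) c = star a (star b c) + star b c + star a c := by
  have h : a * (b * c - b - c) = a * (b * c) - a * b - a * c + a + a := by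
    rw [sub_eq_add_neg, sub_eq_add_neg, mul_add_eq, mul_add_eq, mul_neg_eq, mul_neg_eq]
    abel
  unfold star
  rw [mul_assoc, h]
  abel

theorem star_mem_leftSeriesN_succ (a : A) {n : ℕ} {b : A} (hb : b ∈ leftSeriesN A n) :
    star a b ∈ leftSeriesN A (n + 1) :=
  AddSubgroup.subset_closure (Set.mem_image2_of_mem (Set.mem_univ a) hb)

theorem star_mem_rightSeriesN_succ {n : ℕ} {a : A} (ha : a ∈ rightSeriesN A n) (b : A) :
    star a b ∈ rightSeriesN A (n + 1) :=
  AddSubgroup.subset_closure (Set.mem_image2_of_mem ha (Set.mem_univ b))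

theorem star_star_eq_zero_of_leftSeriesN_two_eq_bot (h : leftSeriesN A 2 = ⊥) (x y z : A) :
    star x (star y z) = 0 := by
  have hmem := star_mem_leftSeriesN_succ x
    (star_mem_leftSeriesN_succ (n := 0) y (AddSubgroup.mem_top z))
  rwa [h, AddSubgroup.mem_bot] at hmem

theorem star_star_eq_zero_of_rightSeriesN_two_eq_bot (h : rightSeriesN A 2 = ⊥) (x y z : A) :
    star (star x y) z = 0 := by
  have hmem := star_mem_rightSeriesN_succ
    (star_mem_rightSeriesN_succ (n := 0) (AddSubgroup.mem_top x) y) z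
  rwa [h, AddSubgroup.mem_bot] at hmem

theorem isSubbrace_range {B : Type*} [LeftBrace B] (f : B → A)
    (hadd : ∀ x y, f (x + y) = f x + f y) (hmul : ∀ x y, f (x * y) = f x * f y) :
    IsSubbrace (Set.range f) := by
  let fAdd : B →+ A := AddMonoidHom.mk' f hadd
  let fMul : B →* A := MonoidHom.mk' f hmul
  refine ⟨⟨0, map_zero fAdd⟩, ?_, ?_, ⟨1, map_one fMul⟩, ?_, ?_⟩
  · rintro _ ⟨x, rfl⟩ _ ⟨y, rfl⟩; exact ⟨x + y, hadd x y⟩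
  · rintro _ ⟨x, rfl⟩; exact ⟨-x, map_neg fAdd x⟩
  · rintro _ ⟨x, rfl⟩ _ ⟨y, rfl⟩; exact ⟨x * y, hmul x y⟩
  · rintro _ ⟨x, rfl⟩; exact ⟨x⁻¹, map_inv fMul x⟩

section Nilpotent

variable (hL : ∀ x y z : A, star x (star y z) = 0) (hR : ∀ x y z : A, star (star x y) z = 0)
include hL hR

theorem star_add_star_left (v p q c : A) : star (v + star p q) c = star v c := by
  have hmul : v * star p q = v + star p q := by rw [mul_eq_add_add_star, hL, add_zero]
  rw [← hmul, star_mul_left, hL, hR, zero_add, zero_add]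

/-- `x + y` and `x * y` differ by an element of `A²`, which `star_add_star_left` discards. -/
theorem star_add_left (x y c : A) : star (x + y) c = star x c + star y c := by
  have h : x + y = x * y + star x (-y) := by
    rw [star_neg_right, mul_eq_add_add_star]; abel
  rw [h, star_add_star_left hL hR, star_mul_left, hL, zero_add, add_comm]

def starLeft (c : A) : A →+ A := AddMonoidHom.mk' (star · c) (star_add_left hL hR · · c)

theorem star_zsmul_left (n : ℤ) (a c : A) : star (n • a) c = n • star a c :=
  map_zsmul (starLeft hL hR c) n a

end Nilpotent

end LeftBrace

open LeftBrace

namespace TwoBrace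

variable {A : Type*} [LeftBrace A]

def lift (a : A) (x : TwoBrace) : A := x.1 • a + x.2 • star a a

theorem lift_add (a : A) (x y : TwoBrace) : lift a (x + y) = lift a x + lift a y := by
  show (x.1 + y.1) • a + (x.2 + y.2) • star a a = lift a x + lift a y
  simp only [lift, add_zsmul]
  abel

section Nilpotent

variable (hL : ∀ x y z : A, star x (star y z) = 0) (hR : ∀ x y z : A, star (star x y) z = 0)
include hL hR

theorem star_lift_lift (a : A) (x y : TwoBrace) :
    star (lift a x) (lift a y) = (x.1 * y.1) • star a a := by
  simp only [lift, star_add_right, star_zsmul_right, star_add_left hL hR,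
    star_zsmul_left hL hR, hL, hR, smul_zero, add_zero, smul_smul]

theorem lift_mul (a : A) (x y : TwoBrace) : lift a (x * y) = lift a x * lift a y := by
  show (x.1 + y.1) • a + (x.1 * y.1 + x.2 + y.2) • star a a = lift a x * lift a y
  rw [mul_eq_add_add_star, star_lift_lift hL hR]
  simp only [lift, add_zsmul]
  abel

end Nilpotent

end TwoBrace

theorem twoBrace_epimorphism_general {A : Type*} [LeftBrace A]
    (hgen : ∃ a : A, ∀ S : Set A, IsSubbrace S → a ∈ S → S = Set.univ)
    (hl : leftSeriesN A 2 = ⊥) (hr : rightSeriesN A 2 = ⊥) :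
    ∃ f : TwoBrace → A, Function.Surjective f ∧
      (∀ x y : TwoBrace, f (x + y) = f x + f y) ∧
      (∀ x y : TwoBrace, f (x * y) = f x * f y) := by
  obtain ⟨a, ha⟩ := hgen
  have hL := star_star_eq_zero_of_leftSeriesN_two_eq_bot hl
  have hR := star_star_eq_zero_of_rightSeriesN_two_eq_bot hr
  have hmul := TwoBrace.lift_mul hL hR a
  have ha_mem : a ∈ Set.range (TwoBrace.lift a) :=
    ⟨((1, 0) : ℤ × ℤ), by simp [TwoBrace.lift]⟩
  have hrange := ha _ (isSubbrace_range _ (TwoBrace.lift_add a) hmul) ha_mem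
  exact ⟨TwoBrace.lift a, Set.range_eq_univ.mp hrange, TwoBrace.lift_add a, hmul⟩

/-- **Theorem B1, second part.** Let `D = ℤ × ℤ` be the left
brace with componentwise addition and multiplication
`(k₁,k₂)·(t₁,t₂) = (k₁+t₁, k₁t₁+k₂+t₂)` (the brace `TwoBrace` above). If `A`
is any one-generator left brace with `A³ = ⟨0⟩ = A⁽³⁾`, where `3` and `3` are
the least such integers (i.e. `A ∈ 𝒩_S(3,3)`; here `A³ = leftSeriesN A 2`,
`A⁽³⁾ = rightSeriesN A 2`, `A² = leftSeriesN A 1`, `A⁽²⁾ = rightSeriesN A 1`),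
then there is a surjective brace homomorphism `f : D → A`, i.e. a surjection
that is a homomorphism for both operations. -/
theorem twoBrace_epimorphism {A : Type*} [LeftBrace A]
    (hgen : ∃ a : A, ∀ S : Set A, IsSubbrace S → a ∈ S → S = Set.univ)
    (hl : leftSeriesN A 2 = ⊥) (hr : rightSeriesN A 2 = ⊥)
    (hl' : leftSeriesN A 1 ≠ ⊥) (hr' : rightSeriesN A 1 ≠ ⊥) :
    ∃ f : TwoBrace → A, Function.Surjective f ∧
      (∀ x y : TwoBrace, f (x + y) = f x + f y) ∧
      (∀ x y : TwoBrace, f (x * y) = f x * f y) :=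
  twoBrace_epimorphism_general hgen hl hr
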